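/- The assignment (σ, α) ↦ σ(α) defines a group action of the symmetric group Σ_n on the set Hom_{𝒱_r}((d,m),(e,n)): for all σ, σ′ ∈ Σ_n and every morphism α : (d,m) → (e,n), one has (σσ′)(α) = σ(σ′(α)) and id(α) = α. -/

import Mathlib

open scoped Classical

/-- A morphism `(d,m) → (e,n)` in the Veronese category `𝒱_r`.  Here `M(e)` is realized as
the set of functions `Fin r → ℕ` with coordinate sum `e`. -/
structure VMor (r d m e n : ℕ) where
  hde : d ≤ e
  α₁ : Fin m → Fin n
  mono : StrictMono α₁
  α₂ : ∀ i : Fin n, i ∉ Set.range α₁ → Fin r → ℕ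
  hα₂ : ∀ i hi, ∑ t, α₂ i hi t = e
  α₃ : Fin m → Fin r → ℕ
  hα₃ : ∀ i, ∑ t, α₃ i t = e - d

namespace VMor

variable {r d m e n f p : ℕ}

/-- Composition in the Veronese category. -/
noncomputable def comp (β : VMor r e n f p) (α : VMor r d m e n) : VMor r d m f p where
  hde := α.hde.trans β.hde
  α₁ := β.α₁ ∘ α.α₁
  mono := β.mono.comp α.mono
  α₂ := fun i hi =>
    if h : ∃ i', β.α₁ i' = i then
      α.α₂ h.choose
          (fun hc => hi ⟨hc.choose, by
            rw [Function.comp_apply, hc.choose_spec, h.choose_spec]⟩)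
        + β.α₃ h.choose
    else β.α₂ i fun hmem => h hmem
  hα₂ := fun i hi => by
    beta_reduce
    split
    · rename_i h
      simp only [Pi.add_apply]
      rw [Finset.sum_add_distrib, α.hα₂, β.hα₃]
      have h1 := α.hde
      have h2 := β.hde
      omega
    · exact β.hα₂ _ _
  α₃ := fun i => α.α₃ i + β.α₃ (α.α₁ i)
  hα₃ := fun i => by
    simp only [Pi.add_apply]
    rw [Finset.sum_add_distrib, α.hα₃, β.hα₃]
    have h1 := α.hde
    have h2 := β.hde
    omega

/-- The identity morphism `(d,m) → (d,m)`, given by the identity injection and zero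
vectors for `α₃`. -/
def id (r d m : ℕ) : VMor r d m d m where
  hde := le_refl d
  α₁ := _root_.id
  mono := strictMono_id
  α₂ := fun i hi => absurd ⟨i, rfl⟩ hi
  hα₂ := fun i hi => absurd ⟨i, rfl⟩ hi
  α₃ := fun _ _ => 0
  hα₃ := fun _ => by simp

end VMor

namespace VMor

variable {r d m e n : ℕ}

/-- The action of `σ ∈ Σ_n` on morphisms `(d,m) → (e,n)`.  With `τ` the permutation
induced by `σ` with respect to `α₁` (the unique `τ` with `σ ∘ α₁ ∘ τ⁻¹` order-preserving;
here `τ⁻¹ = Tuple.sort (σ ∘ α₁)`), we set `σ(α)₁ = σ ∘ α₁ ∘ τ⁻¹`, `σ(α)₂ = α₂ ∘ σ⁻¹` and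
`σ(α)₃ = α₃ ∘ τ⁻¹`. -/
noncomputable def permAct (σ : Equiv.Perm (Fin n)) (α : VMor r d m e n) :
    VMor r d m e n where
  hde := α.hde
  α₁ := (⇑σ ∘ α.α₁) ∘ ⇑(Tuple.sort (⇑σ ∘ α.α₁))
  mono := by
    refine Monotone.strictMono_of_injective ?_ ?_
    · exact Tuple.monotone_sort (⇑σ ∘ α.α₁)
    · exact ((σ.injective.comp α.mono.injective).comp (Tuple.sort (⇑σ ∘ α.α₁)).injective)
  α₂ := fun i hi =>
    α.α₂ (σ⁻¹ i) (fun hc =>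
      hi ⟨(Tuple.sort (⇑σ ∘ α.α₁))⁻¹ hc.choose, by
        simp only [Function.comp_apply, Equiv.Perm.coe_inv, Equiv.apply_symm_apply, hc.choose_spec]⟩)
  hα₂ := fun i hi => α.hα₂ _ _
  α₃ := fun i => α.α₃ (Tuple.sort (⇑σ ∘ α.α₁) i)
  hα₃ := fun i => α.hα₃ _

end VMor

lemma sort_uniq {m n : ℕ} (f : Fin m → Fin n) (hf : Function.Injective f)
    (π : Equiv.Perm (Fin m)) (hmono : Monotone (f ∘ ⇑π)) : π = Tuple.sort f :=
  Tuple.eq_sort_iff.mpr ⟨hmono, fun i j hij hfe => (hij.ne (π.injective (hf hfe))).elim⟩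

lemma VMor.ext' {r d m e n : ℕ} (α β : VMor r d m e n)
    (h1 : α.α₁ = β.α₁) (h3 : α.α₃ = β.α₃)
    (h2 : ∀ i hi hi', α.α₂ i hi = β.α₂ i hi') : α = β := by
  cases α; cases β
  dsimp at h1 h3 h2
  subst h1 h3
  congr 1
  funext i hi
  exact h2 i hi hi

/-- The assignment `(σ, α) ↦ σ(α)` is a group action of the symmetric
group `Σ_n` on `Hom_{𝒱_r}((d,m),(e,n))`: `(σσ')(α) = σ(σ'(α))` and `id(α) = α`. -/
theorem permAct_is_group_action (r d m e n : ℕ)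
    (σ σ' : Equiv.Perm (Fin n)) (α : VMor r d m e n) :
    VMor.permAct (σ * σ') α = VMor.permAct σ (VMor.permAct σ' α) ∧
    VMor.permAct 1 α = α := by
  constructor
  · set f := α.α₁ with hf
    have hfin : Function.Injective (⇑(σ * σ') ∘ f) :=
      (σ * σ').injective.comp α.mono.injective
    set s' := Tuple.sort (⇑σ' ∘ f) with hs'
    set t := Tuple.sort (⇑σ ∘ ((⇑σ' ∘ f) ∘ ⇑s')) with ht
    have hπ : t.trans s' = Tuple.sort (⇑(σ * σ') ∘ f) := by
      apply sort_uniq _ hfin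
      have : (⇑(σ * σ') ∘ f) ∘ ⇑(t.trans s') = (⇑σ ∘ ((⇑σ' ∘ f) ∘ ⇑s')) ∘ ⇑t := by
        funext i; simp [Equiv.Perm.coe_mul, Function.comp]
      rw [this]
      exact Tuple.monotone_sort _
    have hπ' : ∀ i, Tuple.sort (⇑(σ * σ') ∘ f) i = s' (t i) := by
      intro i; rw [← hπ]; rfl
    apply VMor.ext'
    · funext i
      show ((⇑(σ * σ') ∘ f) ∘ ⇑(Tuple.sort (⇑(σ * σ') ∘ f))) i = _
      simp only [Function.comp_apply, hπ']
      simp [VMor.permAct, Equiv.Perm.coe_mul, Function.comp]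
      rfl
    · funext i
      show α.α₃ (Tuple.sort (⇑(σ * σ') ∘ f) i) = _
      rw [hπ' i]
      rfl
    · intro i hi hi'
      show α.α₂ ((σ * σ')⁻¹ i) _ = α.α₂ (σ'⁻¹ (σ⁻¹ i)) _
      have : (σ * σ')⁻¹ i = σ'⁻¹ (σ⁻¹ i) := by simp
      congr 1
  · have h1 : ⇑(1 : Equiv.Perm (Fin n)) ∘ α.α₁ = α.α₁ := by
      funext i; simp
    have hs : Tuple.sort (⇑(1 : Equiv.Perm (Fin n)) ∘ α.α₁) = Equiv.refl _ := by
      rw [h1]; exact Tuple.sort_eq_refl_iff_monotone.mpr α.mono.monotone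
    apply VMor.ext'
    · funext i
      show (⇑(1 : Equiv.Perm (Fin n)) ∘ α.α₁) (Tuple.sort (⇑(1 : Equiv.Perm (Fin n)) ∘ α.α₁) i) = _
      rw [hs, h1]; rfl
    · funext i
      show α.α₃ (Tuple.sort (⇑(1 : Equiv.Perm (Fin n)) ∘ α.α₁) i) = _
      rw [hs]; rfl
    · intro i hi hi'
      show α.α₂ ((1 : Equiv.Perm (Fin n))⁻¹ i) _ = α.α₂ i _
      have : (1 : Equiv.Perm (Fin n))⁻¹ i = i := by simp
      congr 1
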